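/- If fᵢ'' satisfies 0 < m ≤ fᵢ''(s) ≤ 2u for all s and all i, then for F(x) = ∑ᵢ fᵢ(xᵢ) restricted to the hyperplane {x : 1ᵀx = c}, the condition ‖∇F(x) - (1ᵀ∇F(x)/n)1‖ ≤ δ implies ‖x - x*‖ ≤ δ/m, where x* is the minimizer of F over the hyperplane. -/

import Mathlib

/-!
Since `fᵢ'' ≥ m`, each `fᵢ'` is strongly monotone, so
`m ‖x - x*‖² ≤ ∑ (fᵢ'(xᵢ) - fᵢ'(x*ᵢ)) (xᵢ - x*ᵢ)`.
As `x - x*` sums to zero, the optimality condition at `x*` kills the `fᵢ'(x*ᵢ)` terms and the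
centring of `∇F(x)` changes nothing, so the right side equals `⟨φ, x - x*⟩ ≤ ‖φ‖ ‖x - x*‖`
by Cauchy–Schwarz. Dividing by `‖x - x*‖` gives `m ‖x - x*‖ ≤ ‖φ‖ ≤ δ`.
-/

open Finset

theorem mul_sq_sub_le_deriv_sub_mul {f : ℝ → ℝ} {m : ℝ} (hf : Differentiable ℝ (deriv f))
    (hm : ∀ s, m ≤ deriv (deriv f) s) (a b : ℝ) :
    m * (a - b) ^ 2 ≤ (deriv f a - deriv f b) * (a - b) := by
  have hmono : Monotone fun s => deriv f s - m * s := by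
    refine monotone_of_deriv_nonneg (hf.sub (differentiable_id.const_mul m)) fun s => ?_
    have hds : HasDerivAt (fun s => deriv f s - m * s) (deriv (deriv f) s - m) s :=
      (hf s).hasDerivAt.sub ((hasDerivAt_id s).const_mul m |>.congr_deriv (mul_one m))
    rw [hds.deriv]
    linarith [hm s]
  rcases le_total a b with hab | hab <;> nlinarith [hmono hab]

theorem sum_deriv_mul_eq_zero_of_isMinOn {ι : Type*} [Fintype ι] {f : ι → ℝ → ℝ} {c : ℝ}
    {xstar : ι → ℝ} (hf : ∀ i, DifferentiableAt ℝ (f i) (xstar i))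
    (hmin : IsMinOn (fun z => ∑ i, f i (z i)) {z | ∑ i, z i = c} xstar)
    (hstar : ∑ i, xstar i = c) {d : ι → ℝ} (hd : ∑ i, d i = 0) :
    ∑ i, deriv (f i) (xstar i) * d i = 0 := by
  have hline : HasDerivAt (fun t : ℝ => ∑ i, f i (xstar i + t * d i))
      (∑ i, deriv (f i) (xstar i) * d i) 0 := by
    refine HasDerivAt.fun_sum fun i _ => ?_
    have hinner : HasDerivAt (fun t : ℝ => xstar i + t * d i) (d i) 0 := by
      simpa using ((hasDerivAt_id (0 : ℝ)).mul_const (d i)).const_add (xstar i)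
    exact (hf i).hasDerivAt.comp_of_eq 0 hinner (by simp)
  refine IsLocalMin.hasDerivAt_eq_zero (IsMinOn.isLocalMin (s := Set.univ) ?_ Filter.univ_mem)
    hline
  intro t _
  simpa using hmin (show ∑ i, (xstar i + t * d i) = c by
    rw [sum_add_distrib, hstar, ← mul_sum, hd, mul_zero, add_zero])

theorem sum_sub_const_mul_eq_of_sum_eq_zero {ι : Type*} [Fintype ι] (g d : ι → ℝ) (a : ℝ)
    (hd : ∑ i, d i = 0) : ∑ i, (g i - a) * d i = ∑ i, g i * d i := by
  simp only [sub_mul, sum_sub_distrib, ← mul_sum, hd, mul_zero, sub_zero]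

theorem mul_le_of_mul_sq_le_mul {m a b : ℝ} (ha : 0 ≤ a) (hb : 0 ≤ b) (h : m * a ^ 2 ≤ b * a) :
    m * a ≤ b := by
  rcases ha.eq_or_lt with rfl | ha
  · simpa using hb
  · nlinarith

theorem stmt_16_general (n : ℕ)
    (f : Fin n → ℝ → ℝ) (m u : ℝ) (hm : 0 < m)
    (hC2 : ∀ i, ContDiff ℝ 2 (f i))
    (hf'' : ∀ i s, m ≤ deriv (deriv (f i)) s ∧ deriv (deriv (f i)) s ≤ 2 * u)
    (c : ℝ) (x xstar : Fin n → ℝ)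
    (hxfeas : (∑ i, x i) = c) (hstarfeas : (∑ i, xstar i) = c)
    (hstarmin : ∀ z : Fin n → ℝ, (∑ i, z i) = c →
      (∑ i, f i (xstar i)) ≤ ∑ i, f i (z i))
    (φ : Fin n → ℝ)
    (hφ : ∀ i, φ i = deriv (f i) (x i) - (∑ j, deriv (f j) (x j)) / n)
    (δ : ℝ)
    (hsmall : Real.sqrt (∑ i, φ i ^ 2) ≤ δ) :
    Real.sqrt (∑ i, (x i - xstar i) ^ 2) ≤ δ / m := by
  set d := fun i => x i - xstar i
  have hd : ∑ i, d i = 0 := by simp only [d, sum_sub_distrib, hxfeas, hstarfeas, sub_self]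
  have hopt : ∑ i, deriv (f i) (xstar i) * d i = 0 :=
    sum_deriv_mul_eq_zero_of_isMinOn (fun i => ((hC2 i).differentiable two_ne_zero).differentiableAt)
      (isMinOn_iff.mpr hstarmin) hstarfeas hd
  have hkey : m * ∑ i, d i ^ 2 ≤ ∑ i, φ i * d i := calc
    m * ∑ i, d i ^ 2
      ≤ ∑ i, (deriv (f i) (x i) - deriv (f i) (xstar i)) * d i := by
        rw [mul_sum]
        exact sum_le_sum fun i _ => mul_sq_sub_le_deriv_sub_mul (hC2 i).differentiable_deriv_two
          (fun s => (hf'' i s).1) _ _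
    _ = ∑ i, deriv (f i) (x i) * d i := by
        simp only [sub_mul, sum_sub_distrib, hopt, sub_zero]
    _ = ∑ i, φ i * d i := by
        simp only [hφ, sum_sub_const_mul_eq_of_sum_eq_zero _ _ _ hd]
  have hcs := Real.sum_mul_le_sqrt_mul_sqrt univ φ d
  have hmd : m * Real.sqrt (∑ i, d i ^ 2) ≤ Real.sqrt (∑ i, φ i ^ 2) :=
    mul_le_of_mul_sq_le_mul (Real.sqrt_nonneg _) (Real.sqrt_nonneg _) <| by
      rw [Real.sq_sqrt (sum_nonneg fun i _ => sq_nonneg _)]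
      exact hkey.trans hcs
  rw [le_div_iff₀ hm, mul_comm]
  exact hmd.trans hsmall

/-- Strong convexity converts small gradient disagreement into distance to optimum. -/
theorem stmt_16 (n : ℕ) (hn : 0 < n)
    (f : Fin n → ℝ → ℝ) (m u : ℝ) (hm : 0 < m) (hmu : m ≤ 2 * u)
    (hC2 : ∀ i, ContDiff ℝ 2 (f i))
    (hf'' : ∀ i s, m ≤ deriv (deriv (f i)) s ∧ deriv (deriv (f i)) s ≤ 2 * u)
    (c : ℝ) (x xstar : Fin n → ℝ)
    (hxfeas : (∑ i, x i) = c) (hstarfeas : (∑ i, xstar i) = c)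
    (hstarmin : ∀ z : Fin n → ℝ, (∑ i, z i) = c →
      (∑ i, f i (xstar i)) ≤ ∑ i, f i (z i))
    (φ : Fin n → ℝ)
    (hφ : ∀ i, φ i = deriv (f i) (x i) - (∑ j, deriv (f j) (x j)) / n)
    (δ : ℝ) (hδ : 0 ≤ δ)
    (hsmall : Real.sqrt (∑ i, φ i ^ 2) ≤ δ) :
    Real.sqrt (∑ i, (x i - xstar i) ^ 2) ≤ δ / m :=
  stmt_16_general n f m u hm hC2 hf'' c x xstar hxfeas hstarfeas hstarmin φ hφ δ hsmall
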